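/- arXiv:2409.08405 — 2 statements merged into one kernel-verified Lean document; each statement's English description precedes it below -/
import Mathlib

section
/- Let G = (V, E_1, …, E_k) be a multilayer graph. The minimum of Σ_{i∈[k]} |E_i∖S_i| + d_k(S_1,…,S_k) over all families of labelings S_i ⊆ E_i (i ∈ [k]) in which each S_i fulfills the STC for E_i equals the minimum of Σ_{i∈[k]} |E_i∖S_i| over all such families that additionally satisfy d_k(S_1,…,S_k) = 0. -/
/-!
Both sets of values are the same. A consistent family has the same value on both sides; conversely,
given any STC family `S`, delete the strong label of every edge that is weak in some layer. Each
layer stays a subset of an STC labeling, hence STC; an edge still strong somewhere was weak nowhere,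
and is still weak nowhere, so no disagreement is left; and each deleted strong label, of which there
are exactly `d_k(S)`, turns into one weak label.
-/

open Finset

/-- A wedge `(v, {u, w})` of an edge set `E`. -/
def IsWedge {V : Type*} (E : Finset (Sym2 V)) (v u w : V) : Prop :=
  u ≠ v ∧ v ≠ w ∧ u ≠ w ∧ s(u, v) ∈ E ∧ s(v, w) ∈ E ∧ s(u, w) ∉ E

/-- A labeling `S ⊆ E` fulfills the strong triadic closure for `E`. -/
def FulfillsSTC {V : Type*} (E S : Finset (Sym2 V)) : Prop :=
  ∀ u v w : V, u ≠ v → v ≠ w → u ≠ w → s(u, v) ∈ S → s(v, w) ∈ S → s(u, w) ∈ E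

/-- `s(e)`: the number of layers in which `e` is labeled strong. -/
def sCount {V : Type*} [DecidableEq V] {k : ℕ} (Ss : Fin k → Finset (Sym2 V))
    (e : Sym2 V) : ℕ :=
  (Finset.univ.filter fun i => e ∈ Ss i).card

/-- `w(e)`: the number of layers in which `e` is labeled weak. -/
def wCount {V : Type*} [DecidableEq V] {k : ℕ} (Es Ss : Fin k → Finset (Sym2 V))
    (e : Sym2 V) : ℕ :=
  (Finset.univ.filter fun i => e ∈ Es i ∧ e ∉ Ss i).card

/-- `d_k(S_1, …, S_k) = ∑_{e ∈ E, w(e) > 0} s(e)`: the number of disagreements. -/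
def disagree {V : Type*} [DecidableEq V] {k : ℕ} (Es Ss : Fin k → Finset (Sym2 V)) : ℕ :=
  ∑ e ∈ (Finset.univ.biUnion Es).filter (fun e => 0 < wCount Es Ss e), sCount Ss e

lemma Finset.sum_card_inter_eq_sum_card_filter_mem {ι α : Type*} [DecidableEq α]
    (I : Finset ι) (S : ι → Finset α) (D : Finset α) :
    ∑ i ∈ I, #(S i ∩ D) = ∑ e ∈ D, #{i ∈ I | e ∈ S i} := by
  simp_rw [inter_comm _ D, ← filter_mem_eq_inter, card_eq_sum_ones, sum_filter]
  exact sum_comm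

lemma Finset.card_sdiff_sdiff_of_subset {α : Type*} [DecidableEq α] {S E : Finset α}
    (hSE : S ⊆ E) (D : Finset α) : #(E \ (S \ D)) = #(E \ S) + #(S ∩ D) := by
  have h₁ := card_sdiff_add_card_eq_card (sdiff_subset.trans hSE : S \ D ⊆ E)
  have h₂ := card_sdiff_add_card_eq_card hSE
  have h₃ := card_sdiff_add_card_inter S D
  omega

lemma FulfillsSTC.mono {V : Type*} {E S T : Finset (Sym2 V)} (hS : FulfillsSTC E S)
    (hTS : T ⊆ S) : FulfillsSTC E T :=
  fun u v w huv hvw huw h₁ h₂ => hS u v w huv hvw huw (hTS h₁) (hTS h₂)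

section Contested

variable {V : Type*} [DecidableEq V] {k : ℕ} (Es Ss : Fin k → Finset (Sym2 V))

def contested : Finset (Sym2 V) :=
  (univ.biUnion Es).filter fun e => 0 < wCount Es Ss e

lemma disagree_eq_sum_contested : disagree Es Ss = ∑ e ∈ contested Es Ss, sCount Ss e := rfl

lemma mem_of_notMem_contested {e : Sym2 V} (he : e ∉ contested Es Ss) {i : Fin k}
    (hi : e ∈ Es i) : e ∈ Ss i := by
  by_contra hSi
  refine he (mem_filter.mpr ⟨mem_biUnion.mpr ⟨i, mem_univ i, hi⟩, card_pos.mpr ⟨i, ?_⟩⟩)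
  exact mem_filter.mpr ⟨mem_univ i, hi, hSi⟩

lemma disagree_sdiff_contested :
    disagree Es (fun i => Ss i \ contested Es Ss) = 0 := by
  refine sum_eq_zero fun e he => card_eq_zero.mpr (filter_eq_empty_iff.mpr ?_)
  intro i _ hi
  have he_uncontested : e ∉ contested Es Ss := (mem_sdiff.mp hi).2
  obtain ⟨j, hj⟩ := card_pos.mp (mem_filter.mp he).2
  obtain ⟨-, hEj, hj_weak⟩ := mem_filter.mp hj
  exact hj_weak (mem_sdiff.mpr ⟨mem_of_notMem_contested Es Ss he_uncontested hEj, he_uncontested⟩)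

lemma sum_card_sdiff_sdiff_contested (hSs : ∀ i, Ss i ⊆ Es i) :
    ∑ i, #(Es i \ (Ss i \ contested Es Ss)) = ∑ i, #(Es i \ Ss i) + disagree Es Ss := by
  simp_rw [card_sdiff_sdiff_of_subset (hSs _), sum_add_distrib,
    sum_card_inter_eq_sum_card_filter_mem, disagree_eq_sum_contested, sCount]

end Contested

/-- The minimum of `∑_i |E_i ∖ S_i| + d_k(S_1, …, S_k)` over all families of labelings
each fulfilling the STC equals the minimum of `∑_i |E_i ∖ S_i|` over all such families
with no disagreements. -/
theorem min_multilayer_stc_eq_min_consistent {V : Type*} [DecidableEq V] {k : ℕ}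
    (Es : Fin k → Finset (Sym2 V)) :
    sInf {n : ℕ | ∃ Ss : Fin k → Finset (Sym2 V),
        (∀ i, Ss i ⊆ Es i) ∧ (∀ i, FulfillsSTC (Es i) (Ss i)) ∧
        n = (∑ i : Fin k, (Es i \ Ss i).card) + disagree Es Ss}
      = sInf {n : ℕ | ∃ Ss : Fin k → Finset (Sym2 V),
        (∀ i, Ss i ⊆ Es i) ∧ (∀ i, FulfillsSTC (Es i) (Ss i)) ∧
        disagree Es Ss = 0 ∧ n = ∑ i : Fin k, (Es i \ Ss i).card} := by
  congr 1
  ext n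
  constructor
  · rintro ⟨Ss, hSs, hstc, rfl⟩
    exact ⟨fun i => Ss i \ contested Es Ss, fun i => sdiff_subset.trans (hSs i),
      fun i => (hstc i).mono sdiff_subset, disagree_sdiff_contested Es Ss,
      (sum_card_sdiff_sdiff_contested Es Ss hSs).symm⟩
  · rintro ⟨Ss, hSs, hstc, hd, rfl⟩
    exact ⟨Ss, hSs, hstc, by rw [hd, add_zero]⟩
end

section
/- Let G = (V, E_1, …, E_k) be a multilayer graph with aggregated edge set E and for e ∈ E let m(e) = |{ ℓ ∈ [k] : e ∈ E_ℓ }|. Then the optimum of MinMultiLayerSTC on G, i.e., the minimum of Σ_{i∈[k]} |E_i∖S_i| + d_k(S_1,…,S_k) over all families of labelings S_i ⊆ E_i each fulfilling the STC for E_i, equals the minimum of Σ_{e∈E} y(e)·m(e) over all functions y : E → {0,1} satisfying y({i,j}) + y({i,h}) ≥ 1 for every wedge (i,{j,h}) ∈ 𝒲(E_ℓ) and every ℓ ∈ [k]. -/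
open Finset

/-- `m(e) = |{ℓ ∈ [k] : e ∈ E_ℓ}|`: the number of layers containing `e`. -/
def mlayers {V : Type*} [DecidableEq V] {k : ℕ} (Es : Fin k → Finset (Sym2 V))
    (e : Sym2 V) : ℕ :=
  (Finset.univ.filter fun i => e ∈ Es i).card

/-!
Both optima are minima over the same set of values. A labeling `S` with the STC gives the
ILP solution `y(e) = [w(e) > 0]`: every wedge has a weak edge, and by `m = s + w` the cost
`∑ w(e) + ∑_{w(e) > 0} s(e)` equals `∑ y(e) m(e)`. Conversely a feasible `y` gives the
labeling `S_i = {e ∈ E_i : y(e) = 0}`, which has the STC and, since an edge is then weak in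
all of its layers or in none, the same indicator `[w(e) > 0] = y(e)`.
-/

section Labeling

variable {V : Type*} [DecidableEq V] {k : ℕ}

theorem sum_card_sdiff_eq_sum_wCount (Es Ss : Fin k → Finset (Sym2 V)) :
    ∑ i, (Es i \ Ss i).card = ∑ e ∈ univ.biUnion Es, wCount Es Ss e := by
  have hlayer : ∀ i, (Es i \ Ss i).card
      = ((univ.biUnion Es).filter fun e => e ∈ Es i ∧ e ∉ Ss i).card := by
    intro i
    congr 1
    ext e
    simp only [mem_sdiff, mem_filter, mem_biUnion, mem_univ, true_and]
    exact ⟨fun h => ⟨⟨i, h.1⟩, h⟩, And.right⟩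
  simp only [hlayer, card_filter]
  rw [sum_comm]
  simp only [wCount, card_filter]

theorem mlayers_eq_sCount_add_wCount {Es Ss : Fin k → Finset (Sym2 V)}
    (hsub : ∀ i, Ss i ⊆ Es i) (e : Sym2 V) :
    mlayers Es e = sCount Ss e + wCount Es Ss e := by
  rw [mlayers, sCount, wCount, ← card_union_of_disjoint]
  · congr 1
    ext i
    simp only [mem_union, mem_filter, mem_univ, true_and]
    exact ⟨fun he => (em _).imp_right fun hs => ⟨he, hs⟩,
      fun h => h.elim (hsub i ·) And.left⟩
  · exact disjoint_filter.2 fun _ _ hs h => h.2 hs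

def weakIndicator (Es Ss : Fin k → Finset (Sym2 V)) (e : Sym2 V) : ℕ :=
  if 0 < wCount Es Ss e then 1 else 0

theorem weakIndicator_le_one (Es Ss : Fin k → Finset (Sym2 V)) (e : Sym2 V) :
    weakIndicator Es Ss e ≤ 1 := by
  unfold weakIndicator; split <;> omega

theorem weakIndicator_eq_one {Es Ss : Fin k → Finset (Sym2 V)} {i : Fin k} {e : Sym2 V}
    (he : e ∈ Es i) (hs : e ∉ Ss i) : weakIndicator Es Ss e = 1 :=
  if_pos <| card_pos.2 ⟨i, by simp [he, hs]⟩

theorem sum_card_sdiff_add_disagree {Es Ss : Fin k → Finset (Sym2 V)}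
    (hsub : ∀ i, Ss i ⊆ Es i) :
    ∑ i, (Es i \ Ss i).card + disagree Es Ss
      = ∑ e ∈ univ.biUnion Es, weakIndicator Es Ss e * mlayers Es e := by
  have hterm : ∀ e, weakIndicator Es Ss e * mlayers Es e
      = wCount Es Ss e + if 0 < wCount Es Ss e then sCount Ss e else 0 := by
    intro e
    rw [weakIndicator, mlayers_eq_sCount_add_wCount hsub]
    split <;> omega
  rw [sum_card_sdiff_eq_sum_wCount, disagree, sum_filter, ← sum_add_distrib]
  simp only [hterm]

theorem weakIndicator_filter_eq_zero
    (Es : Fin k → Finset (Sym2 V)) {y : Sym2 V → ℕ} (hy : ∀ e, y e ≤ 1)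
    {e : Sym2 V} (he : e ∈ univ.biUnion Es) :
    weakIndicator Es (fun i => (Es i).filter fun e => y e = 0) e = y e := by
  obtain ⟨i, -, hi⟩ := mem_biUnion.1 he
  rcases Nat.le_one_iff_eq_zero_or_eq_one.1 (hy e) with h | h
  · have hstrong : wCount Es (fun i => (Es i).filter fun e => y e = 0) e = 0 := by
      simp [wCount, h]
    simp [weakIndicator, hstrong, h]
  · rw [h]
    exact weakIndicator_eq_one hi (by simp [h])

end Labeling

theorem FulfillsSTC.notMem_or_notMem_of_isWedge {V : Type*} {E S : Finset (Sym2 V)}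
    (hS : FulfillsSTC E S) {v u w : V} (hw : IsWedge E v u w) :
    s(u, v) ∉ S ∨ s(v, w) ∉ S := by
  obtain ⟨huv, hvw, huw, -, -, hnot⟩ := hw
  by_contra! h
  exact hnot (hS u v w huv hvw huw h.1 h.2)

theorem fulfillsSTC_filter_eq_zero {V : Type*} {E : Finset (Sym2 V)} {y : Sym2 V → ℕ}
    (hy : ∀ v u w, IsWedge E v u w → 1 ≤ y s(u, v) + y s(v, w)) :
    FulfillsSTC E (E.filter fun e => y e = 0) := by
  intro u v w huv hvw huw h₁ h₂
  rw [mem_filter] at h₁ h₂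
  by_contra h
  have := hy v u w ⟨huv, hvw, huw, h₁.1, h₂.1, h⟩
  omega

/-- The optimum of MinMultiLayerSTC equals the optimum of its ILP formulation with
binary variables `y(e)` and constraints `y({u,v}) + y({v,w}) ≥ 1` for every wedge
`(v, {u, w})` of every layer. -/
theorem min_multilayer_stc_eq_ilp {V : Type*} [DecidableEq V] {k : ℕ}
    (Es : Fin k → Finset (Sym2 V)) :
    sInf {n : ℕ | ∃ Ss : Fin k → Finset (Sym2 V),
        (∀ i, Ss i ⊆ Es i) ∧ (∀ i, FulfillsSTC (Es i) (Ss i)) ∧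
        n = (∑ i : Fin k, (Es i \ Ss i).card) + disagree Es Ss}
      = sInf {n : ℕ | ∃ y : Sym2 V → ℕ, (∀ e, y e ≤ 1) ∧
        (∀ ℓ : Fin k, ∀ v u w : V, IsWedge (Es ℓ) v u w →
          1 ≤ y s(u, v) + y s(v, w)) ∧
        n = ∑ e ∈ Finset.univ.biUnion Es, y e * mlayers Es e} := by
  congr 1
  ext n
  constructor
  · rintro ⟨Ss, hsub, hstc, rfl⟩
    refine ⟨weakIndicator Es Ss, weakIndicator_le_one Es Ss, ?_,
      sum_card_sdiff_add_disagree hsub⟩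
    intro ℓ v u w hw
    rcases (hstc ℓ).notMem_or_notMem_of_isWedge hw with h | h
    · rw [weakIndicator_eq_one hw.2.2.2.1 h]; omega
    · rw [weakIndicator_eq_one hw.2.2.2.2.1 h]; omega
  · rintro ⟨y, hy, hwedge, rfl⟩
    refine ⟨fun i => (Es i).filter fun e => y e = 0, fun i => filter_subset _ _,
      fun i => fulfillsSTC_filter_eq_zero (hwedge i), ?_⟩
    rw [sum_card_sdiff_add_disagree fun i => filter_subset _ _]
    exact sum_congr rfl fun e he => by rw [weakIndicator_filter_eq_zero Es hy he]
end
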